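/- For every integer ℓ ≥ 1 and every real s with 0 ≤ s ≤ ℓ there exists a constant C_ℓ > 0 such that for every a in the open unit disk of ℝ² ≅ ℂ and every integer n ≥ 1, the Fourier coefficients ĝ_a(k) of the 2π-periodic function g_a(θ) = ln|e^{iθ} − a| satisfy ∑_{|k| > n} (1 + |k|²)^s |ĝ_a(k)|² ≤ C_ℓ · n^{2(s − ℓ)} · (1 − |a|)^{1 − 2ℓ}. -/

import Mathlib

open MeasureTheory

noncomputable section

/-- The `k`-th Fourier coefficient `ĝ(k) = (1/2π)∫₀^{2π} e^{-ikθ} g(θ) dθ`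
of a `2π`-periodic function `g : ℝ → ℝ` (viewed with values in `ℂ`). -/
def fourierCoefficient (g : ℝ → ℝ) (k : ℤ) : ℂ :=
  (1 / (2 * Real.pi) : ℝ) *
    ∫ θ in (0:ℝ)..(2 * Real.pi), Complex.exp (-(k : ℂ) * θ * Complex.I) * (g θ : ℂ)

/-!
For `‖a‖ < 1` we have `log ‖e^{iθ} - a‖ = log ‖1 - a e^{-iθ}‖ = -Re ∑_{m ≥ 1} (a e^{-iθ})^m / m`,
a uniformly convergent series, so integrating term by term gives `ĝ_a(k) = -(conj a)^k / (2k)`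
for `k > 0`, and `|ĝ_a(k)| = ‖a‖^|k| / (2|k|)` for every `k ≠ 0` since `g_a` is real.

With `r = ‖a‖` and `d = 1 - r`, the inequality `r ≤ e^{-d}` gives `r^j (j d)^m ≤ m!`. Applied with
`m = 2ℓ - 2` to one of the two factors `r^j` in `|ĝ_a(j)|²`, it turns the weight
`(1 + j²)^s / j² ≲ j^{2s-2}` into `j^{2(s-ℓ)} ≤ n^{2(s-ℓ)}` at the price of `d^{2-2ℓ}`,
and the other factor sums to `∑_{k ∈ ℤ} r^|k| = (1 + r)/(1 - r) ≤ 2/d`.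
-/

open Complex ComplexConjugate
open scoped Real Nat

theorem integral_exp_int_mul_I (p : ℤ) :
    ∫ θ in (0:ℝ)..2 * π, exp (p * θ * I) = if p = 0 then (2 * π : ℂ) else 0 := by
  split_ifs with hp
  · simp [hp]
  · have hpI : (p : ℂ) * I ≠ 0 := mul_ne_zero (by exact_mod_cast hp) I_ne_zero
    simp_rw [mul_right_comm _ _ I]
    rw [integral_exp_mul_complex hpI, ofReal_zero, mul_zero, exp_zero,
      show (p : ℂ) * I * (2 * π : ℝ) = p * (2 * π * I) by push_cast; ring,
      exp_int_mul_two_pi_mul_I, sub_self, zero_div]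

theorem fourierCoefficient_neg (g : ℝ → ℝ) (k : ℤ) :
    fourierCoefficient g (-k) = conj (fourierCoefficient g k) := by
  simp only [fourierCoefficient, map_mul, conj_ofReal, ← intervalIntegral.intervalIntegral_conj]
  congr 2; funext θ
  simp [← exp_conj, conj_ofReal]

theorem hasSum_log_norm_one_sub {w : ℂ} (hw : ‖w‖ < 1) :
    HasSum (fun m : ℕ => -(w ^ m + conj w ^ m) / (2 * m)) (Real.log ‖1 - w‖) := by
  have h := hasSum_taylorSeries_neg_log hw
  convert! (h.add (h.mapL conjCLE.toContinuousLinearMap)).neg.div_const 2 using 1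
  · ext m
    simp only [neg_add_rev, ContinuousLinearEquiv.coe_coe, ContinuousAlgEquiv.coeCLE_apply,
      map_div₀, conjCAE_apply, map_pow, map_natCast]
    ring
  · rw [← log_re]
    simp only [map_neg, ContinuousLinearEquiv.coe_coe, conjCLE_apply, re_eq_add_conj]
    ring

/-- `-Re ((a e^{-iθ})^m) / m`; the term `m = 0` vanishes because `x / 0 = 0`. -/
def logSeriesTerm (a : ℂ) (m : ℕ) (θ : ℝ) : ℂ :=
  -(a ^ m * exp (-(m * θ * I)) + conj a ^ m * exp (m * θ * I)) / (2 * m)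

theorem hasSum_logSeriesTerm {a : ℂ} (ha : ‖a‖ < 1) (θ : ℝ) :
    HasSum (fun m => logSeriesTerm a m θ) (Real.log ‖exp (θ * I) - a‖) := by
  set w := a * exp (-(θ * I))
  have hexp : ‖exp (-(θ * I))‖ = 1 := by
    simpa using norm_exp_ofReal_mul_I (-θ)
  have hw : ‖w‖ < 1 := by rwa [norm_mul, hexp, mul_one]
  have hsub : exp (θ * I) - a = exp (θ * I) * (1 - w) := by
    rw [mul_sub, mul_one, mul_left_comm, ← exp_add, add_neg_cancel, exp_zero, mul_one]
  rw [hsub, norm_mul, norm_exp_ofReal_mul_I, one_mul]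
  convert hasSum_log_norm_one_sub hw using 3 with m
  simp only [logSeriesTerm, w, map_mul, ← exp_conj, mul_pow, ← exp_nat_mul]
  simp only [neg_add_rev, mul_neg, map_neg, map_mul, conj_ofReal, conj_I, neg_neg]
  ring_nf

theorem norm_logSeriesTerm_le (a : ℂ) (m : ℕ) (θ : ℝ) : ‖logSeriesTerm a m θ‖ ≤ ‖a‖ ^ m := by
  rcases Nat.eq_zero_or_pos m with rfl | hm
  · simp [logSeriesTerm]
  have h₁ : ‖a ^ m * exp (-(m * θ * I))‖ = ‖a‖ ^ m := by simp [norm_exp]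
  have h₂ : ‖conj a ^ m * exp (m * θ * I)‖ = ‖a‖ ^ m := by simp [norm_exp]
  have h2m : ‖(2 * m : ℂ)‖ = 2 * m := by simp
  calc ‖logSeriesTerm a m θ‖ ≤ (‖a‖ ^ m + ‖a‖ ^ m) / (2 * m) := by
        rw [logSeriesTerm, norm_div, norm_neg, h2m]
        gcongr
        exact (norm_add_le _ _).trans_eq (by rw [h₁, h₂])
    _ = ‖a‖ ^ m / m := by field_simp; ring
    _ ≤ ‖a‖ ^ m := div_le_self (by positivity) (by exact_mod_cast hm)

theorem integral_exp_mul_logSeriesTerm (a : ℂ) {j : ℕ} (hj : 0 < j) (m : ℕ) :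
    ∫ θ in (0:ℝ)..2 * π, exp (-(j : ℂ) * θ * I) * logSeriesTerm a m θ =
      if m = j then -π * conj a ^ j / j else 0 := by
  have hsplit : ∀ θ : ℝ, exp (-(j : ℂ) * θ * I) * logSeriesTerm a m θ =
      -(a ^ m / (2 * m)) * exp (((-(j + m) : ℤ) : ℂ) * θ * I) +
        -(conj a ^ m / (2 * m)) * exp (((m - j : ℤ) : ℂ) * θ * I) := by
    intro θ
    have e₁ : exp (((-(j + m) : ℤ) : ℂ) * θ * I) = exp (-(j : ℂ) * θ * I) * exp (-(m * θ * I)) := by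
      rw [← exp_add]; push_cast; ring_nf
    have e₂ : exp (((m - j : ℤ) : ℂ) * θ * I) = exp (-(j : ℂ) * θ * I) * exp (m * θ * I) := by
      rw [← exp_add]; push_cast; ring_nf
    rw [e₁, e₂, logSeriesTerm]
    ring
  simp_rw [hsplit]
  rw [intervalIntegral.integral_add (by apply Continuous.intervalIntegrable; fun_prop)
      (by apply Continuous.intervalIntegrable; fun_prop),
    intervalIntegral.integral_const_mul, intervalIntegral.integral_const_mul,
    integral_exp_int_mul_I, integral_exp_int_mul_I, if_neg (by omega)]
  split_ifs with h₁ h₂ h₂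
  · subst h₂; field_simp; ring
  · omega
  · omega
  · ring

theorem fourierCoefficient_log_norm_exp_sub_natCast {a : ℂ} (ha : ‖a‖ < 1) {j : ℕ} (hj : 0 < j) :
    fourierCoefficient (fun θ : ℝ => Real.log ‖exp (θ * I) - a‖) j = -conj a ^ j / (2 * j) := by
  have hsum := intervalIntegral.hasSum_integral_of_dominated_convergence
    (F := fun m θ => exp (-(j : ℂ) * θ * I) * logSeriesTerm a m θ) (μ := volume)
    (a := 0) (b := 2 * π) (fun m _ => ‖a‖ ^ m)
    (fun m => (by unfold logSeriesTerm; fun_prop : Continuous _).aestronglyMeasurable)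
    (fun m => .of_forall fun θ _ => by
      simpa [norm_exp] using norm_logSeriesTerm_le a m θ)
    (.of_forall fun _ _ => summable_geometric_of_lt_one (norm_nonneg a) ha)
    intervalIntegrable_const
    (.of_forall fun θ _ => (hasSum_logSeriesTerm ha θ).mul_left _)
  simp only [integral_exp_mul_logSeriesTerm a hj] at hsum
  rw [fourierCoefficient, Int.cast_natCast, hsum.unique (hasSum_ite_eq j _)]
  push_cast
  field_simp

theorem norm_fourierCoefficient_log_norm_exp_sub {a : ℂ} (ha : ‖a‖ < 1) {k : ℤ} (hk : k ≠ 0) :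
    ‖fourierCoefficient (fun θ : ℝ => Real.log ‖exp (θ * I) - a‖) k‖ =
      ‖a‖ ^ k.natAbs / (2 * k.natAbs) := by
  obtain ⟨j, rfl | rfl⟩ := Int.eq_nat_or_neg k <;>
  · have hj : 0 < j := by omega
    simp [fourierCoefficient_neg, fourierCoefficient_log_norm_exp_sub_natCast ha hj]

theorem pow_mul_mul_pow_le_factorial {r : ℝ} (hr0 : 0 ≤ r) (hr1 : r ≤ 1) (j m : ℕ) :
    r ^ j * (j * (1 - r)) ^ m ≤ m ! := by
  set x : ℝ := j * (1 - r)
  have hx : 0 ≤ x := mul_nonneg j.cast_nonneg (by linarith)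
  have hr : r ^ j ≤ Real.exp (-x) := calc
    r ^ j ≤ Real.exp (-(1 - r)) ^ j := by
      gcongr; linarith [Real.add_one_le_exp (-(1 - r))]
    _ = Real.exp (-x) := by rw [← Real.exp_nat_mul]; congr 1; ring
  have hxm : x ^ m ≤ m ! * Real.exp x := by
    have := Real.pow_div_factorial_le_exp x hx m
    rwa [div_le_iff₀ (by positivity), mul_comm] at this
  calc r ^ j * x ^ m ≤ Real.exp (-x) * (m ! * Real.exp x) := by gcongr
    _ = m ! := by rw [mul_left_comm, ← Real.exp_add, neg_add_cancel, Real.exp_zero, mul_one]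

theorem one_add_sq_rpow_le {x s : ℝ} (hx : 1 ≤ x) (hs : 0 ≤ s) :
    (1 + x ^ 2) ^ s ≤ 2 ^ s * x ^ (2 * s) := by
  calc (1 + x ^ 2) ^ s ≤ (2 * x ^ 2) ^ s := by gcongr; nlinarith
    _ = 2 ^ s * x ^ (2 * s) := by
      rw [Real.mul_rpow (by norm_num) (by positivity), ← Real.rpow_natCast, ← Real.rpow_mul]
      · norm_num
      · linarith

theorem hasSum_pow_natAbs {r : ℝ} (hr : |r| < 1) :
    HasSum (fun k : ℤ => r ^ k.natAbs) ((1 + r) / (1 - r)) := by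
  have hgeom := hasSum_geometric_of_abs_lt_one hr
  have hneg : HasSum (fun n : ℕ => r ^ (-((n : ℤ) + 1)).natAbs) (r * (1 - r)⁻¹) := by
    have hidx : ∀ n : ℕ, (-((n : ℤ) + 1)).natAbs = n + 1 := by omega
    simpa only [hidx, pow_succ'] using hgeom.mul_left r
  convert HasSum.of_nat_of_neg_add_one (f := fun k : ℤ => r ^ k.natAbs) hgeom hneg using 1
  have : 1 - r ≠ 0 := by linarith [le_abs_self r]
  field_simp

theorem weighted_sq_pow_div_le {p n j : ℕ} {s r : ℝ} (hs0 : 0 ≤ s) (hsp : s ≤ p + 1)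
    (hr0 : 0 ≤ r) (hr1 : r < 1) (hn : 1 ≤ n) (hnj : n < j) :
    (1 + (j : ℝ) ^ 2) ^ s * (r ^ j / (2 * j)) ^ 2 ≤
      2 ^ s * (2 * p)! * (n : ℝ) ^ (2 * (s - (p + 1))) / (4 * (1 - r) ^ (2 * p)) * r ^ j := by
  have hd : 0 < 1 - r := by linarith
  have hj1 : (1 : ℝ) ≤ j := by exact_mod_cast (hn.trans hnj.le)
  have hj : (0 : ℝ) < j := by linarith
  have hsplit : (j : ℝ) ^ (2 * s) = (j : ℝ) ^ (2 * (s - (p + 1))) * (j : ℝ) ^ (2 * p) * j ^ 2 := by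
    rw [mul_assoc, ← pow_add, ← Real.rpow_natCast, ← Real.rpow_add hj]
    push_cast; ring_nf
  have hmono : (j : ℝ) ^ (2 * (s - (p + 1))) ≤ (n : ℝ) ^ (2 * (s - (p + 1))) :=
    Real.rpow_le_rpow_of_nonpos (by exact_mod_cast hn) (by exact_mod_cast hnj.le) (by linarith)
  calc (1 + (j : ℝ) ^ 2) ^ s * (r ^ j / (2 * j)) ^ 2
      ≤ 2 ^ s * (j : ℝ) ^ (2 * s) * (r ^ j / (2 * j)) ^ 2 := by
        gcongr; exact one_add_sq_rpow_le hj1 hs0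
    _ = 2 ^ s * (j : ℝ) ^ (2 * (s - (p + 1))) * (r ^ j * (j * (1 - r)) ^ (2 * p)) /
          (4 * (1 - r) ^ (2 * p)) * r ^ j := by
        rw [hsplit, mul_pow]; field_simp; ring
    _ ≤ 2 ^ s * (n : ℝ) ^ (2 * (s - (p + 1))) * (2 * p)! / (4 * (1 - r) ^ (2 * p)) * r ^ j := by
        gcongr
        exact pow_mul_mul_pow_le_factorial hr0 hr1.le j (2 * p)
    _ = _ := by ring

theorem tsum_weighted_sq_pow_div_le {ℓ n : ℕ} {s r : ℝ} (hℓ : 1 ≤ ℓ) (hs0 : 0 ≤ s) (hsℓ : s ≤ ℓ)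
    (hr0 : 0 ≤ r) (hr1 : r < 1) (hn : 1 ≤ n) :
    ∑' k : ℤ, (if n < k.natAbs then (1 + |(k : ℝ)| ^ 2) ^ s * (r ^ k.natAbs / (2 * k.natAbs)) ^ 2
        else 0) ≤
      2 ^ s * (2 * ℓ - 2)! * (n : ℝ) ^ (2 * (s - ℓ)) * (1 - r) ^ (1 - 2 * (ℓ : ℝ)) := by
  obtain ⟨p, rfl⟩ : ∃ p, ℓ = p + 1 := ⟨ℓ - 1, by omega⟩
  push_cast at hsℓ ⊢
  rw [show 2 * (p + 1) - 2 = 2 * p by omega]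
  have hd : 0 < 1 - r := by linarith
  set A := 2 ^ s * (2 * p)! * (n : ℝ) ^ (2 * (s - (p + 1))) / (4 * (1 - r) ^ (2 * p))
  have hbound : ∀ k : ℤ, (if n < k.natAbs then
      (1 + |(k : ℝ)| ^ 2) ^ s * (r ^ k.natAbs / (2 * k.natAbs)) ^ 2 else 0) ≤ A * r ^ k.natAbs := by
    intro k
    split_ifs with hk
    · rw [← Int.cast_abs, ← Nat.cast_natAbs]
      exact weighted_sq_pow_div_le hs0 hsℓ hr0 hr1 hn hk
    · positivity
  have hA := (hasSum_pow_natAbs (abs_lt.mpr ⟨by linarith, hr1⟩)).mul_left A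
  have hsummable := Summable.of_nonneg_of_le (fun k => by split_ifs <;> positivity) hbound
    hA.summable
  rw [show 1 - 2 * ((p : ℝ) + 1) = -((2 * p + 1 : ℕ) : ℝ) by push_cast; ring,
    Real.rpow_neg hd.le, Real.rpow_natCast]
  calc _ ≤ A * ((1 + r) / (1 - r)) := hA.tsum_eq ▸ hsummable.tsum_le_tsum hbound hA.summable
    _ ≤ A * (2 / (1 - r)) := by gcongr; linarith
    _ ≤ _ := by
      simp only [A]
      field_simp
      rw [pow_succ]
      nlinarith [pow_pos hd (2 * p)]

theorem stmt16 (ℓ : ℕ) (hℓ : 1 ≤ ℓ) (s : ℝ) (hs0 : 0 ≤ s) (hsℓ : s ≤ ℓ) :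
    ∃ C > 0, ∀ a : ℂ, ‖a‖ < 1 → ∀ n : ℕ, 1 ≤ n →
      ∑' k : ℤ,
          (if n < k.natAbs then
            (1 + |(k : ℝ)| ^ 2) ^ s *
              ‖fourierCoefficient
                  (fun θ : ℝ => Real.log ‖Complex.exp (θ * Complex.I) - a‖) k‖ ^ 2
          else 0)
        ≤ C * (n : ℝ) ^ (2 * (s - ℓ)) * (1 - ‖a‖) ^ (1 - 2 * (ℓ : ℝ)) := by
  refine ⟨2 ^ s * (2 * ℓ - 2)!, by positivity, fun a ha n hn => ?_⟩
  calc _ = ∑' k : ℤ, (if n < k.natAbs then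
          (1 + |(k : ℝ)| ^ 2) ^ s * (‖a‖ ^ k.natAbs / (2 * k.natAbs)) ^ 2 else 0) := by
        refine tsum_congr fun k => ?_
        split_ifs with hk
        · rw [norm_fourierCoefficient_log_norm_exp_sub ha (by omega)]
        · rfl
    _ ≤ _ := tsum_weighted_sq_pow_div_le hℓ hs0 hsℓ (norm_nonneg a) ha hn
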